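/- arXiv:2304.00859 — 2 statements merged into one kernel-verified Lean document; each statement's English description precedes it below -/
import Mathlib

section
/- Let G be a finite simple graph of order n with at least one edge whose minimum degree satisfies δ(G) = n − k, where k is an integer with 2 ≤ k ≤ n−1. Then str(G) = n + δ(G) if and only if the complement of G contains F_k as a subgraph. -/
open SimpleGraph

/-- The strength of a numbering `f` of a graph `G` on `Fin n`: the maximum value of
`(f u + 1) + (f v + 1)` over edges `uv` of `G` (labels are the 1-based values `f · + 1`). -/
noncomputable def strOf {n : ℕ} (G : SimpleGraph (Fin n)) (f : Fin n ≃ Fin n) : ℕ :=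
  sSup {s | ∃ u v, G.Adj u v ∧ s = ((f u : ℕ) + 1) + ((f v : ℕ) + 1)}

/-- The strength of a graph `G` on `Fin n`: the minimum over all numberings
(bijections `Fin n ≃ Fin n`) of the maximum edge label. -/
noncomputable def str {n : ℕ} (G : SimpleGraph (Fin n)) : ℕ :=
  sInf {s | ∃ f : Fin n ≃ Fin n, s = strOf G f}

/-- The domination number: minimum size of a set `S` such that every vertex not
in `S` is adjacent to some vertex of `S`. -/
noncomputable def dominationNumber {n : ℕ} (G : SimpleGraph (Fin n)) : ℕ :=
  sInf {k | ∃ S : Finset (Fin n), (∀ v ∉ S, ∃ u ∈ S, G.Adj u v) ∧ S.card = k}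

/-- The independence number: maximum size of a set of pairwise non-adjacent vertices. -/
noncomputable def indepNumber {n : ℕ} (G : SimpleGraph (Fin n)) : ℕ :=
  sSup {k | ∃ S : Finset (Fin n), (∀ u ∈ S, ∀ v ∈ S, u ≠ v → ¬ G.Adj u v) ∧ S.card = k}

/-- The vertex covering number: minimum size of a set of vertices meeting every edge. -/
noncomputable def vertexCoverNumber {n : ℕ} (G : SimpleGraph (Fin n)) : ℕ :=
  sInf {k | ∃ S : Finset (Fin n), (∀ u v, G.Adj u v → u ∈ S ∨ v ∈ S) ∧ S.card = k}

/-- The edge covering number: minimum size of a set of edges covering every vertex. -/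
noncomputable def edgeCoverNumber {n : ℕ} (G : SimpleGraph (Fin n)) : ℕ :=
  sInf {k | ∃ E : Finset (Sym2 (Fin n)),
    (∀ e ∈ E, e ∈ G.edgeSet) ∧ (∀ v : Fin n, ∃ e ∈ E, v ∈ e) ∧ E.card = k}

/-- The matching (edge independence) number: maximum size of a set of pairwise
non-incident edges. -/
noncomputable def matchingNumber {n : ℕ} (G : SimpleGraph (Fin n)) : ℕ :=
  sSup {k | ∃ M : Finset (Sym2 (Fin n)),
    (∀ e ∈ M, e ∈ G.edgeSet) ∧
    (∀ e ∈ M, ∀ e' ∈ M, e ≠ e' → ∀ v : Fin n, v ∈ e → v ∉ e') ∧ M.card = k}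

/-- The graph `F_k` on vertices `v_1, …, v_k` (here `v_i` is `⟨i-1, _⟩ : Fin k`), with
`v_i` adjacent to `v_j` iff `1 ≤ i ≤ ⌊k/2⌋` and `i + 1 ≤ j ≤ k + 1 - i`. -/
noncomputable def Fgraph (k : ℕ) : SimpleGraph (Fin k) :=
  SimpleGraph.fromRel (fun a b =>
    (a : ℕ) + 1 ≤ k / 2 ∧ (a : ℕ) + 2 ≤ (b : ℕ) + 1 ∧ (b : ℕ) + 1 ≤ k + 1 - ((a : ℕ) + 1))

/-- `G` contains `F_k` as a subgraph: there is an injective graph homomorphism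
from `F_k` into `G`. -/
noncomputable def ContainsF {n : ℕ} (G : SimpleGraph (Fin n)) (k : ℕ) : Prop :=
  ∃ φ : Fgraph k →g G, Function.Injective φ


/-! Write `δ = n - k`. In any numbering the vertex labelled `n` has at least `δ` neighbours,
whose labels are distinct, so one of them is at least `δ` and `str G ≥ n + δ`. A numbering
reaches `n + δ` exactly when no edge joins labels `i, j` with `i + j > n + δ`. Only the `k`
largest labels `n + 1 - a` (`1 ≤ a ≤ k`) can occur in such a pair, and two of them do iff
`a ≠ b` and `a + b ≤ k + 1`, which is adjacency in `F_k`. Hence such numberings are the same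
thing as copies of `F_k` in `Gᶜ` placed on the top `k` labels. -/

lemma Fgraph_adj_iff {k : ℕ} {a b : Fin k} :
    (Fgraph k).Adj a b ↔ a ≠ b ∧ (a : ℕ) + b + 2 ≤ k + 1 := by
  rw [Fgraph, fromRel_adj, and_congr_right_iff]
  intro hab
  have : (a : ℕ) ≠ b := Fin.val_ne_of_ne hab
  omega

section Strength

variable {n : ℕ} {G : SimpleGraph (Fin n)}

lemma strOf_le_iff {f : Fin n ≃ Fin n} {m : ℕ} :
    strOf G f ≤ m ↔ ∀ u v, G.Adj u v → (f u : ℕ) + 1 + ((f v : ℕ) + 1) ≤ m := by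
  have hBdd : BddAbove {s | ∃ u v, G.Adj u v ∧ s = ((f u : ℕ) + 1) + ((f v : ℕ) + 1)} := by
    refine ⟨2 * n, ?_⟩
    rintro s ⟨u, v, -, rfl⟩
    have := (f u).isLt
    have := (f v).isLt
    omega
  rw [strOf, csSup_le_iff' hBdd]
  constructor
  · exact fun h u v huv => h _ ⟨u, v, huv, rfl⟩
  · rintro h s ⟨u, v, huv, rfl⟩
    exact h u v huv

lemma label_add_label_le_strOf (f : Fin n ≃ Fin n) {u v : Fin n} (huv : G.Adj u v) :
    (f u : ℕ) + 1 + ((f v : ℕ) + 1) ≤ strOf G f :=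
  strOf_le_iff.1 le_rfl u v huv

lemma str_le_iff {m : ℕ} : str G ≤ m ↔ ∃ f : Fin n ≃ Fin n, strOf G f ≤ m := by
  let S := {s | ∃ f : Fin n ≃ Fin n, s = strOf G f}
  constructor
  · intro h
    obtain ⟨f, hf⟩ := Nat.sInf_mem (s := S) ⟨strOf G (Equiv.refl _), Equiv.refl _, rfl⟩
    exact ⟨f, hf ▸ h⟩
  · rintro ⟨f, hf⟩
    exact (Nat.sInf_le (s := S) ⟨f, rfl⟩).trans hf

variable [DecidableRel G.Adj]

lemma exists_adj_degree_le_label (f : Fin n ≃ Fin n) {u : Fin n} (hu : 0 < G.degree u) :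
    ∃ v, G.Adj u v ∧ G.degree u ≤ (f v : ℕ) + 1 := by
  by_contra! h
  have hsub : (G.neighborFinset u).image (fun v => (f v : ℕ)) ⊆ Finset.range (G.degree u - 1) :=
    fun _ hl => by
      obtain ⟨v, hv, rfl⟩ := Finset.mem_image.1 hl
      have := h v ((mem_neighborFinset G u v).1 hv)
      rw [Finset.mem_range]
      omega
  have hcard := Finset.card_le_card hsub
  rw [Finset.card_image_of_injective _ (fun _ _ h => f.injective (Fin.ext h)),
    card_neighborFinset_eq_degree, Finset.card_range] at hcard
  omega

lemma add_minDegree_le_strOf (h : 0 < G.minDegree) (f : Fin n ≃ Fin n) :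
    n + G.minDegree ≤ strOf G f := by
  obtain _ | n := n
  · simp [minDegree_of_subsingleton] at h
  set u := f.symm (Fin.last n)
  have hdeg := G.minDegree_le_degree u
  obtain ⟨v, huv, hv⟩ := exists_adj_degree_le_label f (h.trans_le hdeg)
  have := label_add_label_le_strOf f huv
  simp only [u, Equiv.apply_symm_apply, Fin.val_last] at this
  omega

lemma add_minDegree_le_str (h : 0 < G.minDegree) : n + G.minDegree ≤ str G :=
  le_csInf ⟨strOf G (Equiv.refl _), Equiv.refl _, rfl⟩ fun _ ⟨f, hf⟩ =>
    hf ▸ add_minDegree_le_strOf h f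

end Strength

section TopLabels

variable {n k : ℕ} {G : SimpleGraph (Fin n)}

lemma containsF_compl_of_strOf_le (hk : k ≤ n) {f : Fin n ≃ Fin n}
    (hf : strOf G f ≤ n + (n - k)) : ContainsF Gᶜ k := by
  let φ : Fin k → Fin n := fun a => f.symm (Fin.rev (Fin.castLE hk a))
  have hφ : φ.Injective :=
    f.symm.injective.comp (Fin.rev_injective.comp (Fin.castLE_injective hk))
  have hlabel : ∀ a, (f (φ a) : ℕ) = n - (a + 1) := fun a => by simp [φ]
  refine ⟨⟨φ, fun {a b} hab => ?_⟩, hφ⟩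
  rw [Fgraph_adj_iff] at hab
  refine (compl_adj _ _ _).2 ⟨hφ.ne hab.1, fun hG => ?_⟩
  have := strOf_le_iff.1 hf _ _ hG
  rw [hlabel, hlabel] at this
  omega

lemma exists_strOf_le_of_containsF_compl (hk : k ≤ n) (h : ContainsF Gᶜ k) :
    ∃ f : Fin n ≃ Fin n, strOf G f ≤ n + (n - k) := by
  obtain ⟨φ, hφ⟩ := h
  obtain ⟨f, hf⟩ := Equiv.Perm.exists_extending_pair φ (fun a => Fin.rev (Fin.castLE hk a)) hφ
    (Fin.rev_injective.comp (Fin.castLE_injective hk))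
  have htop : ∀ w, n - k ≤ (f w : ℕ) →
      ∃ a : Fin k, φ a = w ∧ (f w : ℕ) + a + 1 = n := by
    intro w hw
    have := (f w).isLt
    let a : Fin k := ⟨n - 1 - f w, by omega⟩
    refine ⟨a, f.injective (Fin.ext ?_), by simp only [a]; omega⟩
    simp only [hf, Fin.castLE_mk, Fin.val_rev, a]
    omega
  refine ⟨f, strOf_le_iff.2 fun u v huv => ?_⟩
  by_contra! hlarge
  have := (f u).isLt
  have := (f v).isLt
  obtain ⟨a, rfl, ha⟩ := htop u (by omega)
  obtain ⟨b, rfl, hb⟩ := htop v (by omega)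
  have hF : (Fgraph k).Adj a b := Fgraph_adj_iff.2 ⟨fun hab => huv.ne (hab ▸ rfl), by omega⟩
  exact ((compl_adj _ _ _).1 (φ.map_rel hF)).2 huv

end TopLabels

theorem strength_eq_iff_compl_containsF_general (n k : ℕ) (G : SimpleGraph (Fin n))
    [DecidableRel G.Adj]
    (hδ : G.minDegree = n - k) (hk₁ : 2 ≤ k) (hk₂ : k ≤ n - 1) :
    str G = n + G.minDegree ↔ ContainsF Gᶜ k := by
  have hkn : k ≤ n := by omega
  have hlower := add_minDegree_le_str (G := G) (by omega)
  rw [hδ] at hlower ⊢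
  constructor
  · intro h
    obtain ⟨f, hf⟩ := str_le_iff.1 h.le
    exact containsF_compl_of_strOf_le hkn hf
  · intro h
    exact le_antisymm (str_le_iff.2 (exists_strOf_le_of_containsF_compl hkn h)) hlower

/-- For a graph `G` of order `n` with at least one edge and `δ(G) = n - k` where
`2 ≤ k ≤ n - 1`, `str(G) = n + δ(G)` iff the complement of `G` contains `F_k`. -/
theorem strength_eq_iff_compl_containsF (n k : ℕ) (G : SimpleGraph (Fin n))
    [DecidableRel G.Adj] (hE : G.edgeSet.Nonempty)
    (hδ : G.minDegree = n - k) (hk₁ : 2 ≤ k) (hk₂ : k ≤ n - 1) :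
    str G = n + G.minDegree ↔ ContainsF Gᶜ k :=
  strength_eq_iff_compl_containsF_general n k G hδ hk₁ hk₂
end

section
/- For every integer n ≥ 1, the odd cycle C_{2n+1} attains the bound str(G) ≥ 2|V(G)| − 2·min{α(G), α₁(G), β(G), β₁(G)} + 1 with equality; that is, str(C_{2n+1}) = 2(2n+1) − 2·min{α(C_{2n+1}), α₁(C_{2n+1}), β(C_{2n+1}), β₁(C_{2n+1})} + 1. -/
open SimpleGraph

/-!
In any numbering of `C_{2n+1}` the `n + 1` vertices with (0-based) labels `≥ n` outnumber the
largest independent set, which has `n` vertices; so two of them are adjacent, and their labels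
sum to at least `2n + 1`. The zigzag numbering `0, 2n, 1, 2n - 1, …` keeps every edge sum at most
`2n + 1`, so `str(C_{2n+1}) = 2n + 3`. On the other side, `β = β₁ = n`, while `α, α₁ ≥ n + 1`
because the complement of a vertex cover is independent and an edge cover needs at least
`(2n + 1) / 2` edges; hence the minimum is `n` and the bound equals `2n + 3` too.
-/

open Finset

section Sym2Counting

variable {V : Type*} [Fintype V] [DecidableEq V]

lemma card_le_two_mul_card_of_forall_exists_mem {E : Finset (Sym2 V)}
    (hE : ∀ v, ∃ e ∈ E, v ∈ e) : Fintype.card V ≤ 2 * #E := by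
  have hcover : (univ : Finset V) ⊆ E.biUnion Sym2.toFinset := fun v _ => by
    obtain ⟨e, he, hv⟩ := hE v
    exact mem_biUnion.2 ⟨e, he, Sym2.mem_toFinset.2 hv⟩
  calc Fintype.card V = #(univ : Finset V) := card_univ.symm
    _ ≤ #(E.biUnion Sym2.toFinset) := card_le_card hcover
    _ ≤ ∑ e ∈ E, #e.toFinset := card_biUnion_le
    _ ≤ ∑ _e ∈ E, 2 := sum_le_sum fun e _ => by rw [Sym2.card_toFinset]; split_ifs <;> omega
    _ = 2 * #E := by rw [sum_const, smul_eq_mul, mul_comm]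

lemma two_mul_card_le_card_of_pairwise_disjoint {M : Finset (Sym2 V)}
    (hdiag : ∀ e ∈ M, ¬ e.IsDiag)
    (hdisj : ∀ e ∈ M, ∀ e' ∈ M, e ≠ e' → ∀ v, v ∈ e → v ∉ e') :
    2 * #M ≤ Fintype.card V := by
  have hpd : (M : Set (Sym2 V)).PairwiseDisjoint Sym2.toFinset := fun e he e' he' hne =>
    disjoint_left.2 fun v hv hv' =>
      hdisj e he e' he' hne v (Sym2.mem_toFinset.1 hv) (Sym2.mem_toFinset.1 hv')
  calc 2 * #M = ∑ e ∈ M, #e.toFinset := by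
        rw [sum_congr rfl fun e he => Sym2.card_toFinset_of_not_isDiag e (hdiag e he),
          sum_const, smul_eq_mul, mul_comm]
    _ = #(M.biUnion Sym2.toFinset) := (card_biUnion hpd).symm
    _ ≤ Fintype.card V := card_le_univ _

end Sym2Counting

section FinGraph

variable {m : ℕ} {G : SimpleGraph (Fin m)}

lemma strOf_le {f : Fin m ≃ Fin m} {k : ℕ}
    (h : ∀ u v, G.Adj u v → (f u : ℕ) + 1 + ((f v : ℕ) + 1) ≤ k) : strOf G f ≤ k :=
  csSup_le' <| by
    rintro s ⟨u, v, huv, rfl⟩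
    exact h u v huv

lemma le_strOf (f : Fin m ≃ Fin m) {u v : Fin m} (huv : G.Adj u v) :
    (f u : ℕ) + 1 + ((f v : ℕ) + 1) ≤ strOf G f := by
  refine le_csSup ⟨2 * m, ?_⟩ ⟨u, v, huv, rfl⟩
  rintro s ⟨a, b, -, rfl⟩
  have := (f a).isLt
  have := (f b).isLt
  omega

lemma str_le (f : Fin m ≃ Fin m) : str G ≤ strOf G f :=
  Nat.sInf_le ⟨f, rfl⟩

lemma le_str {k : ℕ} (h : ∀ f, k ≤ strOf G f) : k ≤ str G :=
  le_csInf ⟨_, Equiv.refl _, rfl⟩ <| by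
    rintro s ⟨f, rfl⟩
    exact h f

lemma card_le_indepNumber {S : Finset (Fin m)} (hS : G.IsIndepSet S) :
    #S ≤ indepNumber G := by
  refine le_csSup ⟨m, ?_⟩ ⟨S, hS, rfl⟩
  rintro k ⟨T, -, rfl⟩
  simpa using T.card_le_univ

lemma indepNumber_le {k : ℕ} (h : ∀ S : Finset (Fin m), G.IsIndepSet S → #S ≤ k) :
    indepNumber G ≤ k :=
  csSup_le' <| by
    rintro _ ⟨S, hS, rfl⟩
    exact h S hS

/-- Half of Gallai's identity `α + β = |V|`: the complement of a vertex cover is independent. -/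
lemma card_le_vertexCoverNumber_add_indepNumber (G : SimpleGraph (Fin m)) :
    m ≤ vertexCoverNumber G + indepNumber G := by
  obtain ⟨S, hS, hcard⟩ := Nat.sInf_mem (s := {k | ∃ S : Finset (Fin m),
      (∀ u v, G.Adj u v → u ∈ S ∨ v ∈ S) ∧ S.card = k})
    ⟨_, univ, fun u _ _ => Or.inl (mem_univ u), rfl⟩
  have hindep : G.IsIndepSet ↑Sᶜ := by
    intro u hu v hv _ huv
    simp only [coe_compl, Set.mem_compl_iff, mem_coe] at hu hv
    exact (hS u v huv).elim hu hv
  have := card_le_indepNumber hindep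
  rw [card_compl, Fintype.card_fin] at this
  have : #S ≤ m := by simpa using S.card_le_univ
  change m ≤ sInf _ + indepNumber G
  omega

lemma two_mul_matchingNumber_le (G : SimpleGraph (Fin m)) : 2 * matchingNumber G ≤ m := by
  suffices matchingNumber G ≤ m / 2 by omega
  refine csSup_le' ?_
  rintro _ ⟨M, hM, hdisj, rfl⟩
  have := two_mul_card_le_card_of_pairwise_disjoint
    (fun e he => G.not_isDiag_of_mem_edgeSet (hM e he)) hdisj
  rw [Fintype.card_fin] at this
  omega

lemma card_le_matchingNumber {M : Finset (Sym2 (Fin m))} (hM : ∀ e ∈ M, e ∈ G.edgeSet)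
    (hdisj : ∀ e ∈ M, ∀ e' ∈ M, e ≠ e' → ∀ v, v ∈ e → v ∉ e') : #M ≤ matchingNumber G := by
  refine le_csSup ⟨Fintype.card (Sym2 (Fin m)), ?_⟩ ⟨M, hM, hdisj, rfl⟩
  rintro _ ⟨M', -, -, rfl⟩
  exact M'.card_le_univ

lemma card_le_two_mul_edgeCoverNumber (hG : ∀ v, ∃ w, G.Adj v w) :
    m ≤ 2 * edgeCoverNumber G := by
  classical
  have hcover (v : Fin m) : ∃ e ∈ G.edgeFinset, v ∈ e := by
    obtain ⟨w, hvw⟩ := hG v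
    exact ⟨s(v, w), G.mem_edgeFinset.2 hvw, Sym2.mem_mk_left v w⟩
  obtain ⟨E, -, hE, hcard⟩ := Nat.sInf_mem (s := {k | ∃ E : Finset (Sym2 (Fin m)),
      (∀ e ∈ E, e ∈ G.edgeSet) ∧ (∀ v : Fin m, ∃ e ∈ E, v ∈ e) ∧ E.card = k})
    ⟨_, G.edgeFinset, fun e he => G.mem_edgeFinset.1 he, hcover, rfl⟩
  have := card_le_two_mul_card_of_forall_exists_mem hE
  rwa [Fintype.card_fin, hcard] at this

/-- The `m - k` vertices labelled at least `k` cannot all be pairwise non-adjacent. -/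
lemma two_mul_add_three_le_strOf {k : ℕ} (hk : indepNumber G + k < m) (f : Fin m ≃ Fin m) :
    2 * k + 3 ≤ strOf G f := by
  set T : Finset (Fin m) := {v | k ≤ (f v : ℕ)}
  have hT : #T = m - k := by
    have hmap : T = ({w : Fin m | k ≤ (w : ℕ)} : Finset _).map f.symm.toEmbedding := by
      ext v
      simp [T]
    have hsplit := card_filter_add_card_filter_not (s := (univ : Finset (Fin m)))
      (fun w : Fin m => (w : ℕ) < k)
    have hlt := Fin.card_filter_val_lt (n := m) (m := k)
    rw [hmap, card_map]
    simp only [card_univ, Fintype.card_fin, not_lt] at hsplit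
    omega
  have hnot : ¬ G.IsIndepSet T := fun hindep => by
    have := card_le_indepNumber hindep
    omega
  simp only [SimpleGraph.IsIndepSet, Set.Pairwise, not_forall, not_not, exists_prop] at hnot
  obtain ⟨u, hu, v, hv, huv, hadj⟩ := hnot
  simp only [T, coe_filter, mem_univ, true_and, Set.mem_ofPred_eq] at hu hv
  have hne : (f u : ℕ) ≠ f v := fun h => huv (f.injective (Fin.ext h))
  have := le_strOf f hadj
  omega

lemma two_mul_add_three_le_str {k : ℕ} (hk : indepNumber G + k < m) : 2 * k + 3 ≤ str G :=
  le_str (two_mul_add_three_le_strOf hk)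

end FinGraph

section CycleGraph

lemma cycleGraph_adj_iff_eq_add_one {m : ℕ} [NeZero m] (hm : 2 ≤ m) {u v : Fin m} :
    (cycleGraph m).Adj u v ↔ v = u + 1 ∨ u = v + 1 := by
  have h1 : ((1 : Fin m) : ℕ) = 1 := by rw [Fin.val_one', Nat.mod_eq_of_lt hm]
  rw [cycleGraph_adj', ← h1, ← Fin.ext_iff, ← Fin.ext_iff, sub_eq_iff_eq_add, sub_eq_iff_eq_add,
    add_comm 1, add_comm 1, or_comm]

lemma cycleGraph_adj_add_one {m : ℕ} [NeZero m] (hm : 2 ≤ m) (v : Fin m) :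
    (cycleGraph m).Adj v (v + 1) :=
  (cycleGraph_adj_iff_eq_add_one hm).2 (Or.inl rfl)

lemma cycleGraph_adj_iff_val {k : ℕ} (hk : 1 ≤ k) {u v : Fin (k + 1)} :
    (cycleGraph (k + 1)).Adj u v ↔ (u : ℕ) + 1 = v ∨ (v : ℕ) + 1 = u ∨
      ((u : ℕ) = k ∧ (v : ℕ) = 0) ∨ ((v : ℕ) = k ∧ (u : ℕ) = 0) := by
  rw [cycleGraph_adj_iff_eq_add_one (by omega)]
  simp only [Fin.ext_iff, Fin.val_add_one, Fin.val_last]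
  split_ifs <;> omega

lemma two_mul_card_le_of_isIndepSet_cycleGraph {m : ℕ} [NeZero m] (hm : 2 ≤ m)
    {S : Finset (Fin m)} (hS : (cycleGraph m).IsIndepSet S) : 2 * #S ≤ m := by
  have hdisj : Disjoint S (S.map (addRightEmbedding 1)) := disjoint_right.2 fun w hw hwS => by
    obtain ⟨v, hv, rfl⟩ := mem_map.1 hw
    exact hS hv hwS (cycleGraph_adj_add_one hm v).ne (cycleGraph_adj_add_one hm v)
  calc 2 * #S = #(S ∪ S.map (addRightEmbedding 1)) := by
        rw [card_union_of_disjoint hdisj, card_map, two_mul]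
    _ ≤ m := by simpa using (S ∪ S.map (addRightEmbedding 1)).card_le_univ

/-- The numbering `0, 2n, 1, 2n - 1, …, n - 1, n + 1, n` around the cycle, with `0`-based labels. -/
def zigzag (n : ℕ) : Fin (2 * n + 1) ≃ Fin (2 * n + 1) where
  toFun j := ⟨if (j : ℕ) % 2 = 0 then j / 2 else 2 * n - j / 2, by split_ifs <;> omega⟩
  invFun l := ⟨if (l : ℕ) ≤ n then 2 * l else 2 * (2 * n - l) + 1, by split_ifs <;> omega⟩
  left_inv j := by
    ext
    simp only
    split_ifs <;> omega
  right_inv l := by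
    ext
    simp only
    split_ifs <;> omega

lemma zigzag_add_zigzag_add_one_le (n : ℕ) (v : Fin (2 * n + 1)) :
    (zigzag n v : ℕ) + zigzag n (v + 1) ≤ 2 * n + 1 := by
  simp only [zigzag, Equiv.coe_fn_mk, Fin.val_add_one, Fin.ext_iff, Fin.val_last]
  split_ifs <;> omega

variable {n : ℕ}

lemma strOf_cycleGraph_zigzag_le (hn : 1 ≤ n) :
    strOf (cycleGraph (2 * n + 1)) (zigzag n) ≤ 2 * n + 3 :=
  strOf_le fun u v huv => by
    rcases (cycleGraph_adj_iff_eq_add_one (by omega)).1 huv with rfl | rfl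
    · have := zigzag_add_zigzag_add_one_le n u
      omega
    · have := zigzag_add_zigzag_add_one_le n v
      omega

lemma indepNumber_cycleGraph (hn : 1 ≤ n) : indepNumber (cycleGraph (2 * n + 1)) = n := by
  refine le_antisymm (indepNumber_le fun S hS => ?_) ?_
  · have := two_mul_card_le_of_isIndepSet_cycleGraph (by omega) hS
    omega
  · have hinj : Function.Injective fun t : Fin n => (⟨2 * t, by omega⟩ : Fin (2 * n + 1)) :=
      fun a b h => by simpa [Fin.ext_iff] using h
    have hindep : (cycleGraph (2 * n + 1)).IsIndepSet
        ↑(univ.image fun t : Fin n => (⟨2 * t, by omega⟩ : Fin (2 * n + 1))) := by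
      intro u hu v hv hne hadj
      simp only [coe_image, coe_univ, Set.image_univ, Set.mem_range] at hu hv
      obtain ⟨t, rfl⟩ := hu
      obtain ⟨t', rfl⟩ := hv
      rw [cycleGraph_adj_iff_val (k := 2 * n) (by omega)] at hadj
      simp only [ne_eq, Fin.ext_iff] at hadj hne
      omega
    simpa [card_image_of_injective _ hinj] using card_le_indepNumber hindep

lemma matchingNumber_cycleGraph (hn : 1 ≤ n) : matchingNumber (cycleGraph (2 * n + 1)) = n := by
  refine le_antisymm ?_ ?_
  · have := two_mul_matchingNumber_le (cycleGraph (2 * n + 1))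
    omega
  · let rung (t : Fin n) : Sym2 (Fin (2 * n + 1)) := s(⟨2 * t, by omega⟩, ⟨2 * t + 1, by omega⟩)
    have hinj : Function.Injective rung := fun a b h => by
      simp only [rung, Sym2.eq_iff, Fin.ext_iff] at h
      omega
    have hedges : ∀ e ∈ univ.image rung, e ∈ (cycleGraph (2 * n + 1)).edgeSet := by
      simp only [mem_image, mem_univ, true_and, forall_exists_index, forall_apply_eq_imp_iff]
      intro t
      rw [mem_edgeSet, cycleGraph_adj_iff_val (k := 2 * n) (by omega)]
      simp
    have hdisj : ∀ e ∈ univ.image rung, ∀ e' ∈ univ.image rung, e ≠ e' →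
        ∀ v, v ∈ e → v ∉ e' := by
      simp only [mem_image, mem_univ, true_and, forall_exists_index, forall_apply_eq_imp_iff]
      intro t t' hne v hv hv'
      simp only [rung, Sym2.mem_iff, Fin.ext_iff] at hv hv'
      exact hne (congrArg rung (Fin.ext (by omega)))
    simpa [card_image_of_injective _ hinj] using card_le_matchingNumber hedges hdisj

lemma str_cycleGraph (hn : 1 ≤ n) : str (cycleGraph (2 * n + 1)) = 2 * n + 3 :=
  le_antisymm ((str_le _).trans (strOf_cycleGraph_zigzag_le hn))
    (two_mul_add_three_le_str (by rw [indepNumber_cycleGraph hn]; omega))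

end CycleGraph

/-- For every `n ≥ 1`, the odd cycle `C_{2n+1}` attains the bound
`str(G) ≥ 2|V(G)| - 2·min{α(G), α₁(G), β(G), β₁(G)} + 1` with equality. -/
theorem oddCycle_attains_bound (n : ℕ) (hn : 1 ≤ n) :
    str (SimpleGraph.cycleGraph (2 * n + 1)) =
      2 * (2 * n + 1) -
        2 * min
          (min (vertexCoverNumber (SimpleGraph.cycleGraph (2 * n + 1)))
               (edgeCoverNumber (SimpleGraph.cycleGraph (2 * n + 1))))
          (min (indepNumber (SimpleGraph.cycleGraph (2 * n + 1)))
               (matchingNumber (SimpleGraph.cycleGraph (2 * n + 1)))) + 1 := by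
  have hβ := indepNumber_cycleGraph hn
  have hβ₁ := matchingNumber_cycleGraph hn
  have hα := card_le_vertexCoverNumber_add_indepNumber (cycleGraph (2 * n + 1))
  have hα₁ := card_le_two_mul_edgeCoverNumber (G := cycleGraph (2 * n + 1))
    fun v => ⟨v + 1, cycleGraph_adj_add_one (by omega) v⟩
  rw [str_cycleGraph hn]
  omega
end
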